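/- Assume ||∇_θ r(s,a;θ)|| ≤ L_r and ||∇_θ r(s,a;θ₁) − ∇_θ r(s,a;θ₂)|| ≤ L_g ||θ₁ − θ₂|| for all s, a and all θ, θ₁, θ₂, and assume the softmax visitation-measure Lipschitz property: for any two softmax policies π_{w₁}, π_{w₂} with parameters w₁, w₂ ∈ ℝ^{S×A} (π_w(a|s) ∝ exp w(s,a)), the discounted state-action visitation measures under P̂ satisfy ||d^{π_{w₁}}_{P̂}(·,·) − d^{π_{w₂}}_{P̂}(·,·)||_TV ≤ C_d ||w₁ − w₂||. Then the gradient of the surrogate objective is Lipschitz continuous: ||∇L̂(θ₁) − ∇L̂(θ₂)|| ≤ L_c ||θ₁ − θ₂|| for all θ₁, θ₂, where L_c = (2 L_q L_r C_d √(|S|·|A|) + 2 L_g)/(1−γ) and L_q = L_r/(1−γ). -/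

import Mathlib

open Real BigOperators Finset

noncomputable section

/-- `P` is a transition kernel: each row `P s a ·` is a probability distribution. -/
def IsKernel {S A : Type} [Fintype S] (P : S → A → S → ℝ) : Prop :=
  (∀ s a s', 0 ≤ P s a s') ∧ ∀ s a, ∑ s', P s a s' = 1

/-- `p` is a policy: each `p s ·` is a probability distribution over actions. -/
def IsPolicy {S A : Type} [Fintype A] (p : S → A → ℝ) : Prop :=
  (∀ s a, 0 ≤ p s a) ∧ ∀ s, ∑ a, p s a = 1

/-- `η` is a probability distribution over states. -/
def IsDist {S : Type} [Fintype S] (η : S → ℝ) : Prop :=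
  (∀ s, 0 ≤ η s) ∧ ∑ s, η s = 1

/-- Distribution of the state at time `t` under initial distribution `η`,
policy `pol` and transition kernel `P`. -/
def stateDist {S A : Type} [Fintype S] [Fintype A]
    (P : S → A → S → ℝ) (pol : S → A → ℝ) (η : S → ℝ) : ℕ → S → ℝ
  | 0 => η
  | (t + 1) => fun s' => ∑ s, ∑ a, stateDist P pol η t s * pol s a * P s a s'

/-- `E_{τ ∼ (η, pol, P)} [ ∑_t γ^t f(s_t, a_t) ]`. -/
def discSum {S A : Type} [Fintype S] [Fintype A]
    (γ : ℝ) (P : S → A → S → ℝ) (pol : S → A → ℝ) (η : S → ℝ) (f : S → A → ℝ) : ℝ :=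
  ∑' t : ℕ, γ ^ t * ∑ s, ∑ a, stateDist P pol η t s * pol s a * f s a

/-- Discounted state-action visitation measure
`d(s,a) = (1-γ) pol(a|s) ∑_t γ^t Pr(s_t = s)`. -/
def visit {S A : Type} [Fintype S] [Fintype A]
    (γ : ℝ) (P : S → A → S → ℝ) (pol : S → A → ℝ) (η : S → ℝ) (s : S) (a : A) : ℝ :=
  (1 - γ) * pol s a * ∑' t : ℕ, γ ^ t * stateDist P pol η t s

/-- Log-sum-exp soft value function `V(s) = log ∑_a exp Q(s,a)`. -/
def lse {S A : Type} [Fintype A] (Q : S → A → ℝ) (s : S) : ℝ :=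
  Real.log (∑ a, Real.exp (Q s a))

/-- Softmax policy `π(a|s) = exp Q(s,a) / ∑_{a'} exp Q(s,a')`. -/
def softmax {S A : Type} [Fintype A] (Q : S → A → ℝ) (s : S) (a : A) : ℝ :=
  Real.exp (Q s a) / ∑ a', Real.exp (Q s a')

set_option linter.unusedSectionVars false

section aux
variable {S A : Type} [Fintype S] [Fintype A] [Nonempty S] [Nonempty A]
variable {γ : ℝ} {P : S → A → S → ℝ} {pol : S → A → ℝ} {η : S → ℝ}

lemma sd_nonneg (hP : IsKernel P) (hpol : IsPolicy pol) (hη : IsDist η) :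
    ∀ t s, 0 ≤ stateDist P pol η t s := by
  intro t
  induction t with
  | zero => exact hη.1
  | succ t ih =>
    intro s'
    apply Finset.sum_nonneg; intro s _
    apply Finset.sum_nonneg; intro a _
    have := ih s
    have := hpol.1 s a
    have := hP.1 s a s'
    positivity

lemma sd_sum (hP : IsKernel P) (hpol : IsPolicy pol) (hη : IsDist η) :
    ∀ t, ∑ s, stateDist P pol η t s = 1 := by
  intro t
  induction t with
  | zero => exact hη.2
  | succ t ih =>
    show ∑ s', ∑ s, ∑ a, stateDist P pol η t s * pol s a * P s a s' = 1
    rw [Finset.sum_comm]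
    calc ∑ s, ∑ s', ∑ a, stateDist P pol η t s * pol s a * P s a s'
        = ∑ s, stateDist P pol η t s := by
          refine Finset.sum_congr rfl fun s _ => ?_
          rw [Finset.sum_comm]
          calc ∑ a, ∑ s', stateDist P pol η t s * pol s a * P s a s'
              = ∑ a, stateDist P pol η t s * pol s a := by
                refine Finset.sum_congr rfl fun a _ => ?_
                rw [← Finset.mul_sum, hP.2 s a, mul_one]
            _ = stateDist P pol η t s := by rw [← Finset.mul_sum, hpol.2 s, mul_one]
      _ = 1 := ih

lemma term_bound (hP : IsKernel P) (hpol : IsPolicy pol) (hη : IsDist η)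
    {f : S → A → ℝ} {C : ℝ} (hf : ∀ s a, |f s a| ≤ C) (t : ℕ) :
    |∑ s, ∑ a, stateDist P pol η t s * pol s a * f s a| ≤ C := by
  calc |∑ s, ∑ a, stateDist P pol η t s * pol s a * f s a|
      ≤ ∑ s, ∑ a, stateDist P pol η t s * pol s a * |f s a| := by
        refine (Finset.abs_sum_le_sum_abs _ _).trans ?_
        refine Finset.sum_le_sum fun s _ => ?_
        refine (Finset.abs_sum_le_sum_abs _ _).trans ?_
        refine Finset.sum_le_sum fun a _ => ?_
        rw [abs_mul, abs_mul, abs_of_nonneg (sd_nonneg hP hpol hη t s),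
          abs_of_nonneg (hpol.1 s a)]
    _ ≤ ∑ s, ∑ a, stateDist P pol η t s * pol s a * C := by
        refine Finset.sum_le_sum fun s _ => Finset.sum_le_sum fun a _ => ?_
        have := sd_nonneg hP hpol hη t s
        have := hpol.1 s a
        exact mul_le_mul_of_nonneg_left (hf s a) (by positivity)
    _ = C := by
        have h1 : ∀ s : S, ∑ a, stateDist P pol η t s * pol s a * C
            = stateDist P pol η t s * C := by
          intro s
          rw [← Finset.sum_mul, ← Finset.mul_sum, hpol.2, mul_one]
        rw [Finset.sum_congr rfl fun s _ => h1 s, ← Finset.sum_mul,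
          sd_sum hP hpol hη t, one_mul]

lemma tb_exists (f : S → A → ℝ) : ∃ C : ℝ, 0 ≤ C ∧ ∀ s a, |f s a| ≤ C := by
  refine ⟨∑ s, ∑ a, |f s a|, by positivity, fun s a => ?_⟩
  calc |f s a| ≤ ∑ a, |f s a| :=
        Finset.single_le_sum (f := fun a => |f s a|) (fun a _ => abs_nonneg _) (Finset.mem_univ a)
    _ ≤ ∑ s, ∑ a, |f s a| :=
        Finset.single_le_sum (f := fun s => ∑ a, |f s a|)
          (fun s _ => Finset.sum_nonneg fun a _ => abs_nonneg _) (Finset.mem_univ s)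

lemma ds_summable (hγ : γ ∈ Set.Ioo (0:ℝ) 1) (hP : IsKernel P) (hpol : IsPolicy pol)
    (hη : IsDist η) (f : S → A → ℝ) :
    Summable (fun t : ℕ => γ ^ t * ∑ s, ∑ a, stateDist P pol η t s * pol s a * f s a) := by
  obtain ⟨C, hC0, hC⟩ := tb_exists f
  refine Summable.of_norm_bounded
    (Summable.mul_left C (summable_geometric_of_lt_one hγ.1.le hγ.2)) fun t => ?_
  have hγ0 : (0:ℝ) < γ := hγ.1
  rw [Real.norm_eq_abs, abs_mul, abs_pow, abs_of_nonneg hγ.1.le, mul_comm C (γ ^ t)]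
  exact mul_le_mul_of_nonneg_left (term_bound hP hpol hη hC t) (by positivity)

lemma ds_abs_le (hγ : γ ∈ Set.Ioo (0:ℝ) 1) (hP : IsKernel P) (hpol : IsPolicy pol)
    (hη : IsDist η) {f : S → A → ℝ} {C : ℝ} (hf : ∀ s a, |f s a| ≤ C) :
    |discSum γ P pol η f| ≤ C / (1 - γ) := by
  have hγ0 : (0:ℝ) < γ := hγ.1
  have hC0 : 0 ≤ C := le_trans (abs_nonneg _) (hf (Classical.arbitrary S) (Classical.arbitrary A))
  have hsum := ds_summable hγ hP hpol hη f
  have hg : Summable (fun t : ℕ => C * γ ^ t) :=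
    Summable.mul_left C (summable_geometric_of_lt_one hγ.1.le hγ.2)
  calc |discSum γ P pol η f|
      ≤ ∑' t : ℕ, ‖γ ^ t * ∑ s, ∑ a, stateDist P pol η t s * pol s a * f s a‖ :=
        norm_tsum_le_tsum_norm hsum.norm
    _ ≤ ∑' t : ℕ, C * γ ^ t := by
        refine Summable.tsum_le_tsum (fun t => ?_) hsum.norm hg
        rw [Real.norm_eq_abs, abs_mul, abs_pow, abs_of_nonneg hγ.1.le, mul_comm C (γ ^ t)]
        exact mul_le_mul_of_nonneg_left (term_bound hP hpol hη hf t) (by positivity)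
    _ = C / (1 - γ) := by
        rw [tsum_mul_left, tsum_geometric_of_lt_one hγ.1.le hγ.2]; ring

lemma ds_sub (hγ : γ ∈ Set.Ioo (0:ℝ) 1) (hP : IsKernel P) (hpol : IsPolicy pol)
    (hη : IsDist η) (f g : S → A → ℝ) :
    discSum γ P pol η (fun s a => f s a - g s a)
      = discSum γ P pol η f - discSum γ P pol η g := by
  unfold discSum
  rw [← Summable.tsum_sub (ds_summable hγ hP hpol hη f) (ds_summable hγ hP hpol hη g)]
  refine tsum_congr fun t => ?_
  rw [← mul_sub, ← Finset.sum_sub_distrib]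
  congr 1
  refine Finset.sum_congr rfl fun s _ => ?_
  rw [← Finset.sum_sub_distrib]
  exact Finset.sum_congr rfl fun a _ => by ring

lemma ds_add (hγ : γ ∈ Set.Ioo (0:ℝ) 1) (hP : IsKernel P) (hpol : IsPolicy pol)
    (hη : IsDist η) (f g : S → A → ℝ) :
    discSum γ P pol η (fun s a => f s a + g s a)
      = discSum γ P pol η f + discSum γ P pol η g := by
  unfold discSum
  rw [← Summable.tsum_add (ds_summable hγ hP hpol hη f) (ds_summable hγ hP hpol hη g)]
  refine tsum_congr fun t => ?_
  rw [← mul_add, ← Finset.sum_add_distrib]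
  congr 1
  refine Finset.sum_congr rfl fun s _ => ?_
  rw [← Finset.sum_add_distrib]
  exact Finset.sum_congr rfl fun a _ => by ring

lemma ds_eq_visit (hγ : γ ∈ Set.Ioo (0:ℝ) 1) (hP : IsKernel P) (hpol : IsPolicy pol)
    (hη : IsDist η) (f : S → A → ℝ) :
    discSum γ P pol η f = (1 - γ)⁻¹ * ∑ s, ∑ a, visit γ P pol η s a * f s a := by
  have hγ0 : (0:ℝ) < γ := hγ.1
  have h1γ : (0:ℝ) < 1 - γ := by linarith [hγ.2]
  set g : S → A → ℕ → ℝ := fun s a t => γ ^ t * stateDist P pol η t s * pol s a * f s a with hg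
  have key : ∀ s a, visit γ P pol η s a * f s a = (1 - γ) * ∑' t : ℕ, g s a t := by
    intro s a
    have e1 : (∑' t : ℕ, g s a t)
        = (∑' t : ℕ, γ ^ t * stateDist P pol η t s) * (pol s a * f s a) := by
      rw [← tsum_mul_right]
      exact tsum_congr fun t => by simp only [hg]; ring
    unfold visit
    rw [e1]; ring
  have hsumm : ∀ s a, Summable (g s a) := by
    intro s a
    refine Summable.of_norm_bounded
      (Summable.mul_left (pol s a * |f s a|) (summable_geometric_of_lt_one hγ.1.le hγ.2))
      fun t => ?_
    have hsd0 := sd_nonneg hP hpol hη t s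
    have hpol0 := hpol.1 s a
    have hγt : (0:ℝ) ≤ γ ^ t := by positivity
    have hsd1 : stateDist P pol η t s ≤ 1 := by
      calc stateDist P pol η t s ≤ ∑ s', stateDist P pol η t s' :=
            Finset.single_le_sum (fun s' _ => sd_nonneg hP hpol hη t s') (Finset.mem_univ s)
        _ = 1 := sd_sum hP hpol hη t
    simp only [hg, Real.norm_eq_abs, abs_mul, abs_pow, abs_of_nonneg hγ.1.le,
      abs_of_nonneg hsd0, abs_of_nonneg hpol0]
    calc γ ^ t * stateDist P pol η t s * pol s a * |f s a|
        = stateDist P pol η t s * (γ ^ t * (pol s a * |f s a|)) := by ring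
      _ ≤ 1 * (γ ^ t * (pol s a * |f s a|)) :=
          mul_le_mul_of_nonneg_right hsd1 (by positivity)
      _ = pol s a * |f s a| * γ ^ t := by ring
  have hs : ∀ s, Summable (fun t => ∑ a, g s a t) :=
    fun s => (hasSum_sum fun a (_ : a ∈ Finset.univ) => (hsumm s a).hasSum).summable
  have main : ∑ s, ∑ a, visit γ P pol η s a * f s a = (1 - γ) * discSum γ P pol η f := by
    calc ∑ s, ∑ a, visit γ P pol η s a * f s a
        = ∑ s, ∑ a, (1 - γ) * ∑' t : ℕ, g s a t :=
          Finset.sum_congr rfl fun s _ => Finset.sum_congr rfl fun a _ => key s a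
      _ = (1 - γ) * ∑ s, ∑ a, ∑' t : ℕ, g s a t := by
          simp only [← Finset.mul_sum]
      _ = (1 - γ) * ∑ s, ∑' t : ℕ, ∑ a, g s a t := by
          congr 1
          exact Finset.sum_congr rfl fun s _ => (Summable.tsum_finsetSum fun a _ => hsumm s a).symm
      _ = (1 - γ) * ∑' t : ℕ, ∑ s, ∑ a, g s a t := by
          congr 1
          exact (Summable.tsum_finsetSum fun s _ => hs s).symm
      _ = (1 - γ) * discSum γ P pol η f := by
          congr 1
          refine tsum_congr fun t => ?_
          rw [Finset.mul_sum]
          refine Finset.sum_congr rfl fun s _ => ?_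
          rw [Finset.mul_sum]
          exact Finset.sum_congr rfl fun a _ => by simp only [hg]; ring
  rw [main, ← mul_assoc, inv_mul_cancel₀ (ne_of_gt h1γ), one_mul]

lemma ds_neg (hγ : γ ∈ Set.Ioo (0:ℝ) 1) (f : S → A → ℝ) :
    discSum γ P pol η (fun s a => -f s a) = -discSum γ P pol η f := by
  unfold discSum
  rw [← tsum_neg]
  refine tsum_congr fun t => ?_
  have : ∑ s, ∑ a, stateDist P pol η t s * pol s a * -f s a
      = -∑ s, ∑ a, stateDist P pol η t s * pol s a * f s a := by
    rw [← Finset.sum_neg_distrib]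
    refine Finset.sum_congr rfl fun s _ => ?_
    rw [← Finset.sum_neg_distrib]
    exact Finset.sum_congr rfl fun a _ => by ring
  rw [this]; ring

/-- Key iteration lemma. -/
lemma iterate_le (hγ : γ ∈ Set.Ioo (0:ℝ) 1) (hP : IsKernel P) (hpol : IsPolicy pol)
    (hη : IsDist η) (u : S → ℝ) (c : S → A → ℝ)
    (hu : ∀ s, u s ≤ (∑ a, pol s a * c s a) + γ * ∑ a, pol s a * ∑ s', P s a s' * u s') :
    ∑ s, η s * u s ≤ discSum γ P pol η c := by
  have hγ0 : (0:ℝ) < γ := hγ.1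
  obtain ⟨Cu, hCu0, hCu⟩ := tb_exists (fun (s : S) (_ : A) => u s)
  have hCu' : ∀ s, |u s| ≤ Cu := fun s => hCu s (Classical.arbitrary A)
  set T : ℕ → ℝ := fun t => γ ^ t * ∑ s, ∑ a, stateDist P pol η t s * pol s a * c s a with hT
  have step : ∀ n, ∑ s, η s * u s ≤
      (∑ t ∈ Finset.range n, T t) + γ ^ n * ∑ s, stateDist P pol η n s * u s := by
    intro n
    induction n with
    | zero => simp [stateDist]
    | succ n ih =>
      refine ih.trans ?_
      rw [Finset.sum_range_succ, add_assoc]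
      refine add_le_add_right ?_ _
      have h1 : ∑ s, stateDist P pol η n s * u s ≤
          ∑ s, stateDist P pol η n s *
            ((∑ a, pol s a * c s a) + γ * ∑ a, pol s a * ∑ s', P s a s' * u s') := by
        refine Finset.sum_le_sum fun s _ => ?_
        exact mul_le_mul_of_nonneg_left (hu s) (sd_nonneg hP hpol hη n s)
      have h2 : ∑ s, stateDist P pol η n s *
            ((∑ a, pol s a * c s a) + γ * ∑ a, pol s a * ∑ s', P s a s' * u s')
          = (∑ s, ∑ a, stateDist P pol η n s * pol s a * c s a)
            + γ * ∑ s', stateDist P pol η (n+1) s' * u s' := by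
        have swap3 : ∑ s, stateDist P pol η n s * ∑ a, pol s a * ∑ s', P s a s' * u s'
            = ∑ s', stateDist P pol η (n+1) s' * u s' := by
          rw [show stateDist P pol η (n+1)
              = fun s' => ∑ s, ∑ a, stateDist P pol η n s * pol s a * P s a s' from rfl]
          calc ∑ s, stateDist P pol η n s * ∑ a, pol s a * ∑ s', P s a s' * u s'
              = ∑ s, ∑ a, ∑ s', stateDist P pol η n s * pol s a * P s a s' * u s' := by
                refine Finset.sum_congr rfl fun s _ => ?_
                rw [Finset.mul_sum]
                refine Finset.sum_congr rfl fun a _ => ?_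
                rw [Finset.mul_sum, Finset.mul_sum]
                exact Finset.sum_congr rfl fun s' _ => by ring
            _ = ∑ s, ∑ s', ∑ a, stateDist P pol η n s * pol s a * P s a s' * u s' :=
                Finset.sum_congr rfl fun s _ => Finset.sum_comm
            _ = ∑ s', ∑ s, ∑ a, stateDist P pol η n s * pol s a * P s a s' * u s' :=
                Finset.sum_comm
            _ = ∑ s', (∑ s, ∑ a, stateDist P pol η n s * pol s a * P s a s') * u s' := by
                refine Finset.sum_congr rfl fun s' _ => ?_
                rw [Finset.sum_mul]
                refine Finset.sum_congr rfl fun s _ => ?_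
                rw [Finset.sum_mul]
        calc ∑ s, stateDist P pol η n s *
              ((∑ a, pol s a * c s a) + γ * ∑ a, pol s a * ∑ s', P s a s' * u s')
            = (∑ s, stateDist P pol η n s * ∑ a, pol s a * c s a)
              + γ * ∑ s, stateDist P pol η n s * ∑ a, pol s a * ∑ s', P s a s' * u s' := by
              simp only [mul_add, Finset.sum_add_distrib, Finset.mul_sum]
              congr 1
              exact Finset.sum_congr rfl fun s _ => Finset.sum_congr rfl fun a _ =>
                Finset.sum_congr rfl fun s' _ => by ring
          _ = (∑ s, ∑ a, stateDist P pol η n s * pol s a * c s a)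
              + γ * ∑ s', stateDist P pol η (n+1) s' * u s' := by
              rw [swap3]
              congr 1
              refine Finset.sum_congr rfl fun s _ => ?_
              rw [Finset.mul_sum]
              exact Finset.sum_congr rfl fun a _ => by ring
      calc γ ^ n * ∑ s, stateDist P pol η n s * u s
          ≤ γ ^ n * ((∑ s, ∑ a, stateDist P pol η n s * pol s a * c s a)
              + γ * ∑ s', stateDist P pol η (n+1) s' * u s') := by
            rw [← h2]
            exact mul_le_mul_of_nonneg_left h1 (by positivity)
        _ = T n + γ ^ (n+1) * ∑ s', stateDist P pol η (n+1) s' * u s' := by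
            simp only [hT]; ring
  have hsumm := ds_summable hγ hP hpol hη c
  have hlim1 : Filter.Tendsto (fun n => ∑ t ∈ Finset.range n, T t)
      Filter.atTop (nhds (discSum γ P pol η c)) := hsumm.hasSum.tendsto_sum_nat
  have hbd : ∀ n, |γ ^ n * ∑ s, stateDist P pol η n s * u s| ≤ Cu * γ ^ n := by
    intro n
    rw [abs_mul, abs_pow, abs_of_nonneg hγ.1.le, mul_comm Cu (γ ^ n)]
    refine mul_le_mul_of_nonneg_left ?_ (by positivity)
    calc |∑ s, stateDist P pol η n s * u s| ≤ ∑ s, stateDist P pol η n s * |u s| := by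
          refine (Finset.abs_sum_le_sum_abs _ _).trans (Finset.sum_le_sum fun s _ => ?_)
          rw [abs_mul, abs_of_nonneg (sd_nonneg hP hpol hη n s)]
      _ ≤ ∑ s, stateDist P pol η n s * Cu :=
          Finset.sum_le_sum fun s _ =>
            mul_le_mul_of_nonneg_left (hCu' s) (sd_nonneg hP hpol hη n s)
      _ = Cu := by rw [← Finset.sum_mul, sd_sum hP hpol hη n, one_mul]
  have hlim2 : Filter.Tendsto (fun n => γ ^ n * ∑ s, stateDist P pol η n s * u s)
      Filter.atTop (nhds 0) := by
    have h0 : Filter.Tendsto (fun n : ℕ => Cu * γ ^ n) Filter.atTop (nhds 0) := by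
      rw [show (0:ℝ) = Cu * 0 by ring]
      exact (tendsto_pow_atTop_nhds_zero_of_lt_one hγ.1.le hγ.2).const_mul Cu
    refine squeeze_zero_norm (fun n => ?_) h0
    exact hbd n
  have := hlim1.add hlim2
  rw [add_zero] at this
  exact le_of_tendsto_of_tendsto' tendsto_const_nhds this step

lemma softmax_policy (Q : S → A → ℝ) : IsPolicy (softmax Q) := by
  constructor
  · intro s a
    unfold softmax
    have h1 : (0:ℝ) < ∑ a', Real.exp (Q s a') :=
      Finset.sum_pos (fun a' _ => Real.exp_pos _) Finset.univ_nonempty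
    positivity
  · intro s
    unfold softmax
    rw [← Finset.sum_div]
    exact div_self (ne_of_gt (Finset.sum_pos (fun a' _ => Real.exp_pos _) Finset.univ_nonempty))

lemma log_softmax (Q : S → A → ℝ) (s : S) (a : A) :
    Real.log (softmax Q s a) = Q s a - lse Q s := by
  unfold softmax lse
  rw [Real.log_div (ne_of_gt (Real.exp_pos _))
    (ne_of_gt (Finset.sum_pos (fun a' _ => Real.exp_pos _) Finset.univ_nonempty)),
    Real.log_exp]

lemma lse_eq_softmax_sum (Q : S → A → ℝ) (s : S) :
    lse Q s = ∑ a, softmax Q s a * (Q s a - Real.log (softmax Q s a)) := by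
  have h := softmax_policy (S := S) (A := A) Q
  calc lse Q s = ∑ a, softmax Q s a * lse Q s := by rw [← Finset.sum_mul, h.2 s, one_mul]
    _ = ∑ a, softmax Q s a * (Q s a - Real.log (softmax Q s a)) := by
      refine Finset.sum_congr rfl fun a _ => ?_
      rw [log_softmax]; ring

lemma gibbs_le (Q : S → A → ℝ) {p : S → A → ℝ} (hp : IsPolicy p) (s : S) :
    ∑ a, p s a * (Q s a - Real.log (p s a)) ≤ lse Q s := by
  set Z : ℝ := ∑ a, Real.exp (Q s a) with hZ
  have hZ0 : 0 < Z := Finset.sum_pos (fun a' _ => Real.exp_pos _) Finset.univ_nonempty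
  have key : ∀ a, p s a * (Q s a - Real.log (p s a)) - p s a * Real.log Z
      ≤ Real.exp (Q s a) / Z - p s a := by
    intro a
    rcases eq_or_lt_of_le (hp.1 s a) with h0 | h0
    · rw [← h0]; simp; positivity
    · have ht : (0:ℝ) < Real.exp (Q s a) / (p s a * Z) := by positivity
      have hlog := Real.log_le_sub_one_of_pos ht
      have hle : Real.log (Real.exp (Q s a) / (p s a * Z))
          = Q s a - Real.log (p s a) - Real.log Z := by
        rw [Real.log_div (ne_of_gt (Real.exp_pos _)) (by positivity), Real.log_exp,
          Real.log_mul (ne_of_gt h0) (ne_of_gt hZ0)]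
        ring
      rw [hle] at hlog
      have := mul_le_mul_of_nonneg_left hlog h0.le
      calc p s a * (Q s a - Real.log (p s a)) - p s a * Real.log Z
          = p s a * (Q s a - Real.log (p s a) - Real.log Z) := by ring
        _ ≤ p s a * (Real.exp (Q s a) / (p s a * Z) - 1) := this
        _ = Real.exp (Q s a) / Z - p s a := by
            field_simp
    -- end
  have hsum := Finset.sum_le_sum fun a (_ : a ∈ Finset.univ) => key a
  rw [Finset.sum_sub_distrib, Finset.sum_sub_distrib, ← Finset.sum_mul, hp.2 s, one_mul,
    ← Finset.sum_div, ← hZ, div_self (ne_of_gt hZ0)] at hsum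
  have : ∑ a, p s a * (Q s a - Real.log (p s a)) - Real.log Z ≤ 0 := by linarith
  unfold lse
  rw [← hZ]
  linarith

lemma lse_lip {Q Q' : S → A → ℝ} {C : ℝ} (s : S) (h : ∀ a, |Q s a - Q' s a| ≤ C) :
    |lse Q s - lse Q' s| ≤ C := by
  have one_side : ∀ (R R' : S → A → ℝ), (∀ a, R s a - R' s a ≤ C) → lse R s - lse R' s ≤ C := by
    intro R R' hR
    unfold lse
    have hpos : (0:ℝ) < ∑ a, Real.exp (R s a) :=
      Finset.sum_pos (fun a _ => Real.exp_pos _) Finset.univ_nonempty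
    have hpos' : (0:ℝ) < ∑ a, Real.exp (R' s a) :=
      Finset.sum_pos (fun a _ => Real.exp_pos _) Finset.univ_nonempty
    have hle : ∑ a, Real.exp (R s a) ≤ Real.exp C * ∑ a, Real.exp (R' s a) := by
      rw [Finset.mul_sum]
      refine Finset.sum_le_sum fun a _ => ?_
      rw [← Real.exp_add]
      exact Real.exp_le_exp.2 (by linarith [hR a])
    have := Real.log_le_log hpos hle
    rw [Real.log_mul (ne_of_gt (Real.exp_pos _)) (ne_of_gt hpos'), Real.log_exp] at this
    linarith
  rw [abs_sub_le_iff]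
  exact ⟨one_side Q Q' fun a => (abs_le.1 (h a)).2 |>.trans_eq rfl |>.trans_eq rfl |>.trans_eq rfl,
    one_side Q' Q fun a => by linarith [(abs_le.1 (h a)).1]⟩

section inner
open InnerProductSpace
variable {E : Type} [NormedAddCommGroup E] [InnerProductSpace ℝ E] [CompleteSpace E]

lemma grad_inner (f : E → ℝ) (x v : E) : ⟪gradient f x, v⟫_ℝ = fderiv ℝ f x v := by
  rw [gradient, ← toDual_apply_apply]; simp

lemma grad_norm (f : E → ℝ) (x : E) : ‖fderiv ℝ f x‖ = ‖gradient f x‖ := by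
  rw [gradient]; exact (LinearIsometryEquiv.norm_map _ _).symm

lemma innerSL_eq_fderiv (f : E → ℝ) (x : E) :
    (innerSL ℝ (gradient f x) : E →L[ℝ] ℝ) = fderiv ℝ f x := by
  refine ContinuousLinearMap.ext fun v => ?_
  exact grad_inner f x v

lemma val_lip (f : E → ℝ) (hf : Differentiable ℝ f) {L : ℝ}
    (hL : ∀ θ, ‖gradient f θ‖ ≤ L) (x y : E) : |f x - f y| ≤ L * ‖x - y‖ := by
  have := Convex.norm_image_sub_le_of_norm_fderiv_le (s := (Set.univ : Set E))
    (fun θ _ => hf.differentiableAt) (fun θ _ => (grad_norm f θ) ▸ hL θ)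
    convex_univ (Set.mem_univ y) (Set.mem_univ x)
  simpa [Real.norm_eq_abs] using this

lemma taylor_bound (f : E → ℝ) (hf : Differentiable ℝ f) {L : ℝ} (hL0 : 0 ≤ L)
    (hL : ∀ x y, ‖gradient f x - gradient f y‖ ≤ L * ‖x - y‖) (x v : E) :
    |f (x + v) - f x - ⟪gradient f x, v⟫_ℝ| ≤ L * (‖v‖ * ‖v‖) := by
  set g : E → ℝ := fun θ => f θ - (innerSL ℝ (gradient f x) : E →L[ℝ] ℝ) θ with hg
  have hder : ∀ θ : E, HasFDerivAt g (fderiv ℝ f θ - innerSL ℝ (gradient f x)) θ :=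
    fun θ => ((hf θ).hasFDerivAt.sub ((innerSL ℝ (gradient f x)).hasFDerivAt))
  have hbound : ∀ θ ∈ segment ℝ x (x + v),
      ‖fderiv ℝ g θ‖ ≤ L * ‖v‖ := by
    intro θ hθ
    rw [(hder θ).fderiv]
    have h1 : ‖fderiv ℝ f θ - innerSL ℝ (gradient f x)‖ = ‖gradient f θ - gradient f x‖ := by
      rw [innerSL_eq_fderiv]
      calc ‖fderiv ℝ f θ - fderiv ℝ f x‖
          = ‖fderiv ℝ (fun y => f y) θ - fderiv ℝ f x‖ := rfl
        _ = ‖gradient f θ - gradient f x‖ := by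
          rw [gradient, gradient, ← LinearIsometryEquiv.map_sub,
            LinearIsometryEquiv.norm_map]
    rw [h1]
    refine (hL θ x).trans ?_
    refine mul_le_mul_of_nonneg_left ?_ ?_
    · obtain ⟨a, b, ha, hb, hab, hθ'⟩ := hθ
      rw [← hθ']
      have : a • x + b • (x + v) - x = b • v := by
        rw [smul_add]
        rw [show a • x + (b • x + b • v) - x = (a + b) • x - x + b • v by
          rw [add_smul]; abel]
        rw [hab, one_smul]; abel
      rw [this, norm_smul, Real.norm_eq_abs, abs_of_nonneg hb]
      nlinarith [norm_nonneg v]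
    · exact hL0
  have := Convex.norm_image_sub_le_of_norm_fderiv_le
    (s := segment ℝ x (x + v)) (fun θ _ => ((hder θ).differentiableAt))
    hbound (convex_segment _ _) (left_mem_segment ℝ x (x + v))
    (right_mem_segment ℝ x (x + v))
  have happ : g (x + v) - g x = f (x + v) - f x - ⟪gradient f x, v⟫_ℝ := by
    simp only [hg]
    rw [show ((innerSL ℝ (gradient f x) : E →L[ℝ] ℝ) (x + v) : ℝ)
        = ⟪gradient f x, x + v⟫_ℝ from rfl,
      show ((innerSL ℝ (gradient f x) : E →L[ℝ] ℝ) x : ℝ) = ⟪gradient f x, x⟫_ℝ from rfl,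
      inner_add_right]
    ring
  rw [Real.norm_eq_abs, happ] at this
  refine this.trans ?_
  rw [show x + v - x = v by abel]
  exact le_of_eq (by ring)

lemma hasFDerivAt_of_quad (f : E → ℝ) (ℓ : E →L[ℝ] ℝ) (x : E) (C : ℝ) (hC : 0 ≤ C)
    (h : ∀ v, |f (x + v) - f x - ℓ v| ≤ C * (‖v‖ * ‖v‖)) : HasFDerivAt f ℓ x := by
  rw [hasFDerivAt_iff_isLittleO_nhds_zero, Asymptotics.isLittleO_iff]
  intro c hc
  rw [Metric.eventually_nhds_iff]
  refine ⟨c / (C + 1), by positivity, fun v hv => ?_⟩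
  have hvn : ‖v‖ < c / (C + 1) := by
    rw [← dist_zero_right]; simpa [dist_comm] using hv
  have hkey : C * ‖v‖ ≤ c := by
    have h1 : C * ‖v‖ ≤ C * (c / (C + 1)) :=
      mul_le_mul_of_nonneg_left hvn.le hC
    have h2 : C * (c / (C + 1)) ≤ c := by
      rw [div_eq_inv_mul, ← mul_assoc]
      have : C * (C + 1)⁻¹ ≤ 1 := by
        rw [mul_inv_le_iff₀ (by positivity), one_mul]; linarith
      nlinarith [hc.le]
    linarith
  calc ‖f (x + v) - f x - ℓ v‖ ≤ C * (‖v‖ * ‖v‖) := by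
        simpa [Real.norm_eq_abs] using h v
    _ = (C * ‖v‖) * ‖v‖ := by ring
    _ ≤ c * ‖v‖ := mul_le_mul_of_nonneg_right hkey (norm_nonneg v)
    _ = c * ‖id v‖ := by simp

end inner
section withE
open InnerProductSpace
variable {E : Type} [NormedAddCommGroup E] [InnerProductSpace ℝ E] [CompleteSpace E]

lemma clm_app (hγ : γ ∈ Set.Ioo (0:ℝ) 1) (hP : IsKernel P) (hpol : IsPolicy pol)
    (hη : IsDist η) (g : S → A → E) (h : E) :
    ((1 - γ)⁻¹ • ∑ p : S × A, visit γ P pol η p.1 p.2 • (innerSL ℝ (g p.1 p.2) : E →L[ℝ] ℝ)) h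
      = discSum γ P pol η (fun s a => ⟪g s a, h⟫_ℝ) := by
  rw [ds_eq_visit hγ hP hpol hη]
  simp only [ContinuousLinearMap.smul_apply, ContinuousLinearMap.coe_sum',
    Finset.sum_apply, smul_eq_mul, innerSL_apply_apply]
  rw [Fintype.sum_prod_type]

lemma Q_lip (hγ : γ ∈ Set.Ioo (0:ℝ) 1) (hP : IsKernel P)
    (Q : E → S → A → ℝ) (r : S → A → E → ℝ) (U : S → A → ℝ)
    (hQ : ∀ θ s a, Q θ s a = r s a θ + U s a + γ * ∑ s', P s a s' * lse (Q θ) s')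
    {Lr : ℝ} (hrl : ∀ s a (x y : E), |r s a x - r s a y| ≤ Lr * ‖x - y‖)
    (x y : E) : ∀ s a, |Q x s a - Q y s a| ≤ Lr / (1 - γ) * ‖x - y‖ := by
  have h1γ : (0:ℝ) < 1 - γ := by linarith [hγ.2]
  set M := Finset.univ.sup' Finset.univ_nonempty
    (fun p : S × A => |Q x p.1 p.2 - Q y p.1 p.2|) with hMdef
  have hM : ∀ s a, |Q x s a - Q y s a| ≤ M :=
    fun s a => Finset.le_sup' (fun p : S × A => |Q x p.1 p.2 - Q y p.1 p.2|)
      (Finset.mem_univ (s, a))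
  have hball : ∀ s a, |Q x s a - Q y s a| ≤ Lr * ‖x - y‖ + γ * M := by
    intro s a
    rw [hQ x s a, hQ y s a]
    have e0 : ∑ s', P s a s' * (lse (Q x) s' - lse (Q y) s')
        = ∑ s', P s a s' * lse (Q x) s' - ∑ s', P s a s' * lse (Q y) s' := by
      rw [← Finset.sum_sub_distrib]
      exact Finset.sum_congr rfl fun _ _ => by ring
    have hsplit : r s a x + U s a + γ * ∑ s', P s a s' * lse (Q x) s'
        - (r s a y + U s a + γ * ∑ s', P s a s' * lse (Q y) s')
        = (r s a x - r s a y) + γ * ∑ s', P s a s' * (lse (Q x) s' - lse (Q y) s') := by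
      rw [e0]; ring
    rw [hsplit]
    refine (abs_add_le _ _).trans ?_
    have t1 : |r s a x - r s a y| ≤ Lr * ‖x - y‖ := hrl s a x y
    have t2 : |γ * ∑ s', P s a s' * (lse (Q x) s' - lse (Q y) s')| ≤ γ * M := by
      rw [abs_mul, abs_of_nonneg hγ.1.le]
      refine mul_le_mul_of_nonneg_left ?_ hγ.1.le
      calc |∑ s', P s a s' * (lse (Q x) s' - lse (Q y) s')|
          ≤ ∑ s', P s a s' * |lse (Q x) s' - lse (Q y) s'| := by
            refine (Finset.abs_sum_le_sum_abs _ _).trans (Finset.sum_le_sum fun s' _ => ?_)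
            rw [abs_mul, abs_of_nonneg (hP.1 s a s')]
        _ ≤ ∑ s', P s a s' * M :=
            Finset.sum_le_sum fun s' _ => mul_le_mul_of_nonneg_left
              (lse_lip s' (fun a' => hM s' a')) (hP.1 s a s')
        _ = M := by rw [← Finset.sum_mul, hP.2 s a, one_mul]
    linarith
  have hMle : M ≤ Lr / (1 - γ) * ‖x - y‖ := by
    obtain ⟨p, _, hpe⟩ := Finset.exists_mem_eq_sup' Finset.univ_nonempty
      (fun p : S × A => |Q x p.1 p.2 - Q y p.1 p.2|)
    have h1 : M ≤ Lr * ‖x - y‖ + γ * M := by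
      calc M = |Q x p.1 p.2 - Q y p.1 p.2| := by rw [hMdef, hpe]
        _ ≤ Lr * ‖x - y‖ + γ * M := hball p.1 p.2
    rw [div_mul_eq_mul_div, le_div_iff₀ h1γ]
    nlinarith
  exact fun s a => (hM s a).trans hMle

end withE
end aux


open InnerProductSpace RealInnerProductSpace in
/-- **Lipschitz smoothness of the surrogate objective.**
Assume the reward gradients are bounded by `L_r` and `L_g`-Lipschitz in `θ`, and
assume the softmax visitation-measure Lipschitz property with constant `C_d`:
for any softmax policies `π_{w₁}, π_{w₂}` (with tables `w₁, w₂ : S × A → ℝ`),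
`‖d^{π_{w₁}}_{P̂} - d^{π_{w₂}}_{P̂}‖_TV ≤ C_d ‖w₁ - w₂‖` (Euclidean norm on tables).
Then `‖∇L̂(θ₁) - ∇L̂(θ₂)‖ ≤ L_c ‖θ₁ - θ₂‖` with
`L_c = (2 L_q L_r C_d √(|S|·|A|) + 2 L_g)/(1-γ)` and `L_q = L_r/(1-γ)`. -/
theorem stmt10 {S A : Type} [Fintype S] [Fintype A] [Nonempty S] [Nonempty A] (d : ℕ)
    (γ : ℝ) (hγ : γ ∈ Set.Ioo (0 : ℝ) 1)
    (P : S → A → S → ℝ) (hP : IsKernel P)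
    (Phat : S → A → S → ℝ) (hPhat : IsKernel Phat)
    (η : S → ℝ) (hη : IsDist η)
    (piE : S → A → ℝ) (hpiE : IsPolicy piE)
    (r : S → A → EuclideanSpace ℝ (Fin d) → ℝ) (U : S → A → ℝ)
    (hrd : ∀ s a, Differentiable ℝ (r s a))
    (Lr Lg : ℝ) (hrb : ∀ s a θ, ‖gradient (r s a) θ‖ ≤ Lr)
    (hrlip : ∀ s a θ₁ θ₂, ‖gradient (r s a) θ₁ - gradient (r s a) θ₂‖ ≤ Lg * ‖θ₁ - θ₂‖)
    (Cd : ℝ)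
    (hvis : ∀ w₁ w₂ : S → A → ℝ,
      (1 / 2) * ∑ s, ∑ a,
          |visit γ Phat (softmax w₁) η s a - visit γ Phat (softmax w₂) η s a| ≤
        Cd * Real.sqrt (∑ s, ∑ a, (w₁ s a - w₂ s a) ^ 2))
    (Q : EuclideanSpace ℝ (Fin d) → S → A → ℝ)
    (hQ : ∀ θ s a, Q θ s a = r s a θ + U s a + γ * ∑ s', Phat s a s' * lse (Q θ) s') :
    ∀ θ₁ θ₂,
      ‖gradient (fun θ' =>
            discSum γ P piE η (fun s a => r s a θ' + U s a) - ∑ s, η s * lse (Q θ') s) θ₁ -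
          gradient (fun θ' =>
            discSum γ P piE η (fun s a => r s a θ' + U s a) - ∑ s, η s * lse (Q θ') s) θ₂‖ ≤
        (2 * (Lr / (1 - γ)) * Lr * Cd *
            Real.sqrt ((Fintype.card S : ℝ) * (Fintype.card A : ℝ)) + 2 * Lg) / (1 - γ) *
          ‖θ₁ - θ₂‖ := by
  intro θ₁ θ₂
  rcases eq_or_ne θ₁ θ₂ with rfl | hne
  · simp
  have h1γ : (0:ℝ) < 1 - γ := by linarith [hγ.2]
  have hθpos : 0 < ‖θ₁ - θ₂‖ := by rwa [norm_pos_iff, sub_ne_zero]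
  have hLr0 : 0 ≤ Lr :=
    le_trans (norm_nonneg _) (hrb (Classical.arbitrary S) (Classical.arbitrary A) θ₁)
  have hLg0 : 0 ≤ Lg := by
    have h := (norm_nonneg _).trans
      (hrlip (Classical.arbitrary S) (Classical.arbitrary A) θ₁ θ₂)
    nlinarith
  have hCd0 : 0 ≤ Cd := by
    have h := hvis (fun _ _ => (1:ℝ)) (fun _ _ => (0:ℝ))
    have hL : (0:ℝ) ≤ (1 / 2) * ∑ s, ∑ a,
        |visit γ Phat (softmax fun _ _ => (1:ℝ)) η s a
          - visit γ Phat (softmax fun _ _ => (0:ℝ)) η s a| := by positivity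
    have hcard : ∑ s : S, ∑ a : A, ((fun _ _ => (1:ℝ)) s a - (fun _ _ => (0:ℝ)) s a) ^ 2
        = (Fintype.card S : ℝ) * (Fintype.card A : ℝ) := by
      simp [Finset.sum_const, Finset.card_univ]
    rw [hcard] at h
    have hpos : 0 < Real.sqrt ((Fintype.card S : ℝ) * (Fintype.card A : ℝ)) := by
      apply Real.sqrt_pos.2
      have h1 : 0 < Fintype.card S := Fintype.card_pos
      have h2 : 0 < Fintype.card A := Fintype.card_pos
      positivity
    nlinarith
  have hsq0 : 0 ≤ Real.sqrt ((Fintype.card S : ℝ) * (Fintype.card A : ℝ)) := Real.sqrt_nonneg _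
  have hLq0 : 0 ≤ Lr / (1 - γ) := div_nonneg hLr0 h1γ.le
  -- basic reward lemmas
  have hrlv : ∀ s a (x y : EuclideanSpace ℝ (Fin d)), |r s a x - r s a y| ≤ Lr * ‖x - y‖ :=
    fun s a x y => val_lip (r s a) (hrd s a) (hrb s a) x y
  have hQl : ∀ (x y : EuclideanSpace ℝ (Fin d)) s a,
      |Q x s a - Q y s a| ≤ Lr / (1 - γ) * ‖x - y‖ :=
    fun x y => Q_lip hγ hPhat Q r U hQ hrlv x y
  have htay : ∀ s a (x v : EuclideanSpace ℝ (Fin d)),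
      |r s a (x + v) - r s a x - ⟪gradient (r s a) x, v⟫_ℝ| ≤ Lg * (‖v‖ * ‖v‖) :=
    fun s a x v => taylor_bound (r s a) (hrd s a) hLg0 (fun p q => hrlip s a p q) x v
  have hcs : ∀ s a (x h : EuclideanSpace ℝ (Fin d)),
      |⟪gradient (r s a) x, h⟫_ℝ| ≤ Lr * ‖h‖ := by
    intro s a x h
    exact (abs_real_inner_le_norm _ _).trans
      (mul_le_mul_of_nonneg_right (hrb s a x) (norm_nonneg h))
  have hcs2 : ∀ s a (x y h : EuclideanSpace ℝ (Fin d)),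
      |⟪gradient (r s a) x, h⟫_ℝ - ⟪gradient (r s a) y, h⟫_ℝ| ≤ Lg * ‖x - y‖ * ‖h‖ := by
    intro s a x y h
    rw [← inner_sub_left]
    exact (abs_real_inner_le_norm _ _).trans
      (mul_le_mul_of_nonneg_right (hrlip s a x y) (norm_nonneg h))
  -- visitation measure difference bound
  have hvb : ∀ x y : EuclideanSpace ℝ (Fin d),
      ∑ s, ∑ a, |visit γ Phat (softmax (Q x)) η s a - visit γ Phat (softmax (Q y)) η s a|
        ≤ 2 * Cd * (Real.sqrt ((Fintype.card S : ℝ) * (Fintype.card A : ℝ))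
            * (Lr / (1 - γ) * ‖x - y‖)) := by
    intro x y
    have h0 := hvis (Q x) (Q y)
    have hs1 : ∑ s, ∑ a, (Q x s a - Q y s a) ^ 2
        ≤ ((Fintype.card S : ℝ) * (Fintype.card A : ℝ)) * (Lr / (1 - γ) * ‖x - y‖) ^ 2 := by
      calc ∑ s, ∑ a, (Q x s a - Q y s a) ^ 2
          ≤ ∑ s : S, ∑ a : A, (Lr / (1 - γ) * ‖x - y‖) ^ 2 := by
            refine Finset.sum_le_sum fun s _ => Finset.sum_le_sum fun a _ => ?_
            have := hQl x y s a
            have habs := abs_nonneg (Q x s a - Q y s a)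
            nlinarith [sq_abs (Q x s a - Q y s a)]
        _ = ((Fintype.card S : ℝ) * (Fintype.card A : ℝ)) * (Lr / (1 - γ) * ‖x - y‖) ^ 2 := by
            simp [Finset.sum_const, Finset.card_univ]; ring
    have hs2 : Real.sqrt (∑ s, ∑ a, (Q x s a - Q y s a) ^ 2)
        ≤ Real.sqrt ((Fintype.card S : ℝ) * (Fintype.card A : ℝ))
            * (Lr / (1 - γ) * ‖x - y‖) := by
      refine (Real.sqrt_le_sqrt hs1).trans ?_
      rw [Real.sqrt_mul (by positivity), Real.sqrt_sq (by positivity)]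
    have := mul_le_mul_of_nonneg_left hs2 hCd0
    linarith
  -- discSum difference bound from visitation bound
  have hdd : ∀ (x y : EuclideanSpace ℝ (Fin d)) (g : S → A → ℝ) (Cg : ℝ), 0 ≤ Cg →
      (∀ s a, |g s a| ≤ Cg) →
      |discSum γ Phat (softmax (Q x)) η g - discSum γ Phat (softmax (Q y)) η g|
        ≤ (1 - γ)⁻¹ * (2 * Cd * (Real.sqrt ((Fintype.card S : ℝ) * (Fintype.card A : ℝ))
            * (Lr / (1 - γ) * ‖x - y‖))) * Cg := by
    intro x y g Cg hCg hg
    rw [ds_eq_visit hγ hPhat (softmax_policy _) hη, ds_eq_visit hγ hPhat (softmax_policy _) hη,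
      ← mul_sub, abs_mul, abs_of_nonneg (inv_nonneg.2 h1γ.le), mul_assoc]
    refine mul_le_mul_of_nonneg_left ?_ (inv_nonneg.2 h1γ.le)
    have e : (∑ s, ∑ a, visit γ Phat (softmax (Q x)) η s a * g s a)
        - ∑ s, ∑ a, visit γ Phat (softmax (Q y)) η s a * g s a
        = ∑ s, ∑ a, (visit γ Phat (softmax (Q x)) η s a
            - visit γ Phat (softmax (Q y)) η s a) * g s a := by
      rw [← Finset.sum_sub_distrib]
      refine Finset.sum_congr rfl fun s _ => ?_
      rw [← Finset.sum_sub_distrib]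
      exact Finset.sum_congr rfl fun a _ => by ring
    rw [e]
    calc |∑ s, ∑ a, (visit γ Phat (softmax (Q x)) η s a
            - visit γ Phat (softmax (Q y)) η s a) * g s a|
        ≤ ∑ s, ∑ a, |visit γ Phat (softmax (Q x)) η s a
            - visit γ Phat (softmax (Q y)) η s a| * Cg := by
          refine (Finset.abs_sum_le_sum_abs _ _).trans (Finset.sum_le_sum fun s _ => ?_)
          refine (Finset.abs_sum_le_sum_abs _ _).trans (Finset.sum_le_sum fun a _ => ?_)
          rw [abs_mul]
          exact mul_le_mul_of_nonneg_left (hg s a) (abs_nonneg _)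
      _ = (∑ s, ∑ a, |visit γ Phat (softmax (Q x)) η s a
            - visit γ Phat (softmax (Q y)) η s a|) * Cg := by
          rw [Finset.sum_mul]
          exact Finset.sum_congr rfl fun s _ => by rw [Finset.sum_mul]
      _ ≤ 2 * Cd * (Real.sqrt ((Fintype.card S : ℝ) * (Fintype.card A : ℝ))
            * (Lr / (1 - γ) * ‖x - y‖)) * Cg :=
          mul_le_mul_of_nonneg_right (hvb x y) hCg
  -- per-state value inequality
  have key_pt : ∀ (x y : EuclideanSpace ℝ (Fin d)) s,
      lse (Q x) s - lse (Q y) s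
        ≤ (∑ a, softmax (Q x) s a * (r s a x - r s a y))
          + γ * ∑ a, softmax (Q x) s a
              * ∑ s', Phat s a s' * (lse (Q x) s' - lse (Q y) s') := by
    intro x y s
    have e1 := lse_eq_softmax_sum (Q x) s
    have e2 : ∑ a, softmax (Q x) s a * (Q y s a - Real.log (softmax (Q x) s a))
        ≤ lse (Q y) s := gibbs_le (Q y) (softmax_policy (Q x)) s
    have e4 : (∑ a, softmax (Q x) s a * (Q x s a - Real.log (softmax (Q x) s a)))
        - (∑ a, softmax (Q x) s a * (Q y s a - Real.log (softmax (Q x) s a)))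
        = ∑ a, softmax (Q x) s a * (Q x s a - Q y s a) := by
      rw [← Finset.sum_sub_distrib]
      exact Finset.sum_congr rfl fun a _ => by ring
    have e3 : lse (Q x) s - lse (Q y) s ≤ ∑ a, softmax (Q x) s a * (Q x s a - Q y s a) := by
      linarith [e4, e2, e1.symm.le, e1.le]
    refine e3.trans (le_of_eq ?_)
    have e5 : ∀ a, Q x s a - Q y s a = (r s a x - r s a y)
        + γ * ∑ s', Phat s a s' * (lse (Q x) s' - lse (Q y) s') := by
      intro a
      have e0 : ∑ s', Phat s a s' * (lse (Q x) s' - lse (Q y) s')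
          = ∑ s', Phat s a s' * lse (Q x) s' - ∑ s', Phat s a s' * lse (Q y) s' := by
        rw [← Finset.sum_sub_distrib]
        exact Finset.sum_congr rfl fun _ _ => by ring
      rw [hQ x s a, hQ y s a, e0]; ring
    calc ∑ a, softmax (Q x) s a * (Q x s a - Q y s a)
        = ∑ a, (softmax (Q x) s a * (r s a x - r s a y)
            + γ * (softmax (Q x) s a
              * ∑ s', Phat s a s' * (lse (Q x) s' - lse (Q y) s'))) := by
          refine Finset.sum_congr rfl fun a _ => ?_
          rw [e5 a]; ring
      _ = (∑ a, softmax (Q x) s a * (r s a x - r s a y))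
          + γ * ∑ a, softmax (Q x) s a
              * ∑ s', Phat s a s' * (lse (Q x) s' - lse (Q y) s') := by
          rw [Finset.sum_add_distrib, ← Finset.mul_sum]
  -- G difference identity
  have gdiff : ∀ x y : EuclideanSpace ℝ (Fin d),
      (∑ s, η s * lse (Q x) s) - (∑ s, η s * lse (Q y) s)
        = ∑ s, η s * (lse (Q x) s - lse (Q y) s) := by
    intro x y
    rw [← Finset.sum_sub_distrib]
    exact Finset.sum_congr rfl fun s _ => by ring
  -- squeeze bounds on G difference
  have hub : ∀ x y : EuclideanSpace ℝ (Fin d),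
      (∑ s, η s * lse (Q x) s) - (∑ s, η s * lse (Q y) s)
        ≤ discSum γ Phat (softmax (Q x)) η (fun s a => r s a x - r s a y) := by
    intro x y
    rw [gdiff x y]
    exact iterate_le hγ hPhat (softmax_policy _) hη _ _ (fun s => key_pt x y s)
  have hlb : ∀ x y : EuclideanSpace ℝ (Fin d),
      discSum γ Phat (softmax (Q y)) η (fun s a => r s a x - r s a y)
        ≤ (∑ s, η s * lse (Q x) s) - (∑ s, η s * lse (Q y) s) := by
    intro x y
    have h0 := hub y x
    have hfe : (fun (s : S) (a : A) => r s a y - r s a x)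
        = (fun s a => -(r s a x - r s a y)) := by funext s a; ring
    rw [hfe, ds_neg hγ] at h0
    linarith
  -- continuous linear maps (candidate derivatives)
  set ℓF : EuclideanSpace ℝ (Fin d) → (EuclideanSpace ℝ (Fin d) →L[ℝ] ℝ) := fun θ =>
    (1 - γ)⁻¹ • ∑ p : S × A, visit γ P piE η p.1 p.2
      • (innerSL ℝ (gradient (r p.1 p.2) θ)) with hℓFdef
  set ℓG : EuclideanSpace ℝ (Fin d) → (EuclideanSpace ℝ (Fin d) →L[ℝ] ℝ) := fun θ =>
    (1 - γ)⁻¹ • ∑ p : S × A, visit γ Phat (softmax (Q θ)) η p.1 p.2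
      • (innerSL ℝ (gradient (r p.1 p.2) θ)) with hℓGdef
  have happF : ∀ θ (h : EuclideanSpace ℝ (Fin d)),
      ℓF θ h = discSum γ P piE η (fun s a => ⟪gradient (r s a) θ, h⟫_ℝ) :=
    fun θ h => clm_app hγ hP hpiE hη (fun s a => gradient (r s a) θ) h
  have happG : ∀ θ (h : EuclideanSpace ℝ (Fin d)),
      ℓG θ h = discSum γ Phat (softmax (Q θ)) η (fun s a => ⟪gradient (r s a) θ, h⟫_ℝ) :=
    fun θ h => clm_app hγ hPhat (softmax_policy _) hη (fun s a => gradient (r s a) θ) h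
  -- derivative of the expert term
  have hF : ∀ θ, HasFDerivAt (fun θ' : EuclideanSpace ℝ (Fin d) =>
      discSum γ P piE η (fun s a => r s a θ' + U s a)) (ℓF θ) θ := by
    intro θ
    refine hasFDerivAt_of_quad _ _ _ (Lg / (1 - γ)) (div_nonneg hLg0 h1γ.le) fun v => ?_
    show |discSum γ P piE η (fun s a => r s a (θ + v) + U s a)
        - discSum γ P piE η (fun s a => r s a θ + U s a) - ℓF θ v| ≤ _
    have hfe : (fun (s : S) (a : A) => r s a (θ + v) - r s a θ - ⟪gradient (r s a) θ, v⟫_ℝ)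
        = (fun s a => (r s a (θ + v) + U s a)
            - ((r s a θ + U s a) + ⟪gradient (r s a) θ, v⟫_ℝ)) := by
      funext s a; ring
    have e2 : discSum γ P piE η
          (fun s a => r s a (θ + v) - r s a θ - ⟪gradient (r s a) θ, v⟫_ℝ)
        = discSum γ P piE η (fun s a => r s a (θ + v) + U s a)
          - discSum γ P piE η (fun s a => r s a θ + U s a) - ℓF θ v := by
      rw [hfe, ds_sub hγ hP hpiE hη (fun s a => r s a (θ + v) + U s a)
          (fun s a => r s a θ + U s a + ⟪gradient (r s a) θ, v⟫_ℝ),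
        ds_add hγ hP hpiE hη (fun s a => r s a θ + U s a)
          (fun s a => ⟪gradient (r s a) θ, v⟫_ℝ), happF θ v]
      ring
    rw [← e2]
    refine (ds_abs_le hγ hP hpiE hη (C := Lg * (‖v‖ * ‖v‖)) fun s a => htay s a θ v).trans
      (le_of_eq (by ring))
  -- derivative of the value term, by squeezing
  have hG : ∀ θ, HasFDerivAt (fun θ' : EuclideanSpace ℝ (Fin d) =>
      ∑ s, η s * lse (Q θ') s)
      (ℓG θ) θ := by
    intro θ
    refine hasFDerivAt_of_quad _ _ _
      (Lg / (1 - γ) + (1 - γ)⁻¹ * (2 * Cd * (Real.sqrt ((Fintype.card S : ℝ)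
        * (Fintype.card A : ℝ)) * (Lr / (1 - γ)))) * Lr)
      (add_nonneg (div_nonneg hLg0 h1γ.le)
        (mul_nonneg (mul_nonneg (inv_nonneg.2 h1γ.le)
          (mul_nonneg (by linarith : (0:ℝ) ≤ 2 * Cd) (mul_nonneg hsq0 hLq0))) hLr0))
      fun v => ?_
    show |(∑ s, η s * lse (Q (θ + v)) s) - (∑ s, η s * lse (Q θ) s) - ℓG θ v| ≤ _
    have hu := hub (θ + v) θ
    have hl := hlb (θ + v) θ
    have happ := happG θ v
    -- bound 1 (upper policy)
    have hb1 : |discSum γ Phat (softmax (Q (θ + v))) η (fun s a => r s a (θ + v) - r s a θ)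
        - discSum γ Phat (softmax (Q (θ + v))) η (fun s a => ⟪gradient (r s a) θ, v⟫_ℝ)|
        ≤ Lg * (‖v‖ * ‖v‖) / (1 - γ) := by
      rw [← ds_sub hγ hPhat (softmax_policy _) hη]
      exact ds_abs_le hγ hPhat (softmax_policy _) hη (C := Lg * (‖v‖ * ‖v‖))
        fun s a => by
          have h0 := htay s a θ v
          have he : r s a (θ + v) - r s a θ - ⟪gradient (r s a) θ, v⟫_ℝ
              = (r s a (θ + v) + U s a) - ((r s a θ + U s a)
                + ⟪gradient (r s a) θ, v⟫_ℝ) := by ring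
          calc |(fun s a => r s a (θ + v) - r s a θ) s a
                - ⟪gradient (r s a) θ, v⟫_ℝ|
              = |r s a (θ + v) - r s a θ - ⟪gradient (r s a) θ, v⟫_ℝ| := rfl
            _ ≤ Lg * (‖v‖ * ‖v‖) := h0
    -- bound 3 (lower policy)
    have hb3 : |discSum γ Phat (softmax (Q θ)) η (fun s a => r s a (θ + v) - r s a θ)
        - discSum γ Phat (softmax (Q θ)) η (fun s a => ⟪gradient (r s a) θ, v⟫_ℝ)|
        ≤ Lg * (‖v‖ * ‖v‖) / (1 - γ) := by
      rw [← ds_sub hγ hPhat (softmax_policy _) hη]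
      exact ds_abs_le hγ hPhat (softmax_policy _) hη (C := Lg * (‖v‖ * ‖v‖))
        fun s a => htay s a θ v
    -- bound 2 (visitation difference)
    have hxy : ‖θ + v - θ‖ = ‖v‖ := by rw [add_sub_cancel_left]
    have hb2 : |discSum γ Phat (softmax (Q (θ + v))) η
          (fun s a => ⟪gradient (r s a) θ, v⟫_ℝ)
        - discSum γ Phat (softmax (Q θ)) η (fun s a => ⟪gradient (r s a) θ, v⟫_ℝ)|
        ≤ (1 - γ)⁻¹ * (2 * Cd * (Real.sqrt ((Fintype.card S : ℝ) * (Fintype.card A : ℝ))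
            * (Lr / (1 - γ) * ‖v‖))) * (Lr * ‖v‖) := by
      have := hdd (θ + v) θ (fun s a => ⟪gradient (r s a) θ, v⟫_ℝ) (Lr * ‖v‖)
        (mul_nonneg hLr0 (norm_nonneg v)) (fun s a => hcs s a θ v)
      rwa [hxy] at this
    have hBsum : Lg * (‖v‖ * ‖v‖) / (1 - γ)
        + (1 - γ)⁻¹ * (2 * Cd * (Real.sqrt ((Fintype.card S : ℝ) * (Fintype.card A : ℝ))
            * (Lr / (1 - γ) * ‖v‖))) * (Lr * ‖v‖)
        = (Lg / (1 - γ) + (1 - γ)⁻¹ * (2 * Cd * (Real.sqrt ((Fintype.card S : ℝ)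
            * (Fintype.card A : ℝ)) * (Lr / (1 - γ)))) * Lr) * (‖v‖ * ‖v‖) := by
      ring
    have hB2nn : (0:ℝ) ≤ (1 - γ)⁻¹ * (2 * Cd * (Real.sqrt ((Fintype.card S : ℝ)
        * (Fintype.card A : ℝ)) * (Lr / (1 - γ) * ‖v‖))) * (Lr * ‖v‖) :=
      mul_nonneg (mul_nonneg (inv_nonneg.2 h1γ.le)
        (mul_nonneg (by linarith : (0:ℝ) ≤ 2 * Cd)
          (mul_nonneg hsq0 (mul_nonneg hLq0 (norm_nonneg v)))))
        (mul_nonneg hLr0 (norm_nonneg v))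
    rw [abs_le]
    obtain ⟨hb1l, hb1r⟩ := abs_le.1 hb1
    obtain ⟨hb2l, hb2r⟩ := abs_le.1 hb2
    obtain ⟨hb3l, hb3r⟩ := abs_le.1 hb3
    constructor
    · linarith
    · linarith
  -- assemble
  have hL : ∀ θ, HasFDerivAt (fun θ' : EuclideanSpace ℝ (Fin d) =>
      discSum γ P piE η (fun s a => r s a θ' + U s a) - ∑ s, η s * lse (Q θ') s)
      (ℓF θ - ℓG θ) θ := fun θ => (hF θ).sub (hG θ)
  have hgrad : ∀ θ, gradient (fun θ' : EuclideanSpace ℝ (Fin d) =>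
      discSum γ P piE η (fun s a => r s a θ' + U s a) - ∑ s, η s * lse (Q θ') s) θ
      = (InnerProductSpace.toDual ℝ (EuclideanSpace ℝ (Fin d))).symm (ℓF θ - ℓG θ) := by
    intro θ
    have h0 : gradient (fun θ' : EuclideanSpace ℝ (Fin d) =>
        discSum γ P piE η (fun s a => r s a θ' + U s a) - ∑ s, η s * lse (Q θ') s) θ
        = (InnerProductSpace.toDual ℝ (EuclideanSpace ℝ (Fin d))).symm (fderiv ℝ (fun θ' =>
          discSum γ P piE η (fun s a => r s a θ' + U s a) - ∑ s, η s * lse (Q θ') s) θ) := rfl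
    rw [h0, (hL θ).fderiv]
  have hinner : ∀ θ (h : EuclideanSpace ℝ (Fin d)),
      ⟪gradient (fun θ' : EuclideanSpace ℝ (Fin d) =>
        discSum γ P piE η (fun s a => r s a θ' + U s a) - ∑ s, η s * lse (Q θ') s) θ, h⟫_ℝ
      = ℓF θ h - ℓG θ h := by
    intro θ h
    rw [hgrad θ, ← InnerProductSpace.toDual_apply_apply, LinearIsometryEquiv.apply_symm_apply,
      ContinuousLinearMap.sub_apply]
  have key : ∀ h : EuclideanSpace ℝ (Fin d),
      |⟪gradient (fun θ' : EuclideanSpace ℝ (Fin d) =>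
          discSum γ P piE η (fun s a => r s a θ' + U s a) - ∑ s, η s * lse (Q θ') s) θ₁
        - gradient (fun θ' : EuclideanSpace ℝ (Fin d) =>
          discSum γ P piE η (fun s a => r s a θ' + U s a) - ∑ s, η s * lse (Q θ') s) θ₂,
        h⟫_ℝ|
      ≤ (2 * (Lr / (1 - γ)) * Lr * Cd *
            Real.sqrt ((Fintype.card S : ℝ) * (Fintype.card A : ℝ)) + 2 * Lg) / (1 - γ)
          * ‖θ₁ - θ₂‖ * ‖h‖ := by
    intro h
    rw [inner_sub_left, hinner θ₁ h, hinner θ₂ h]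
    have htF : |ℓF θ₁ h - ℓF θ₂ h| ≤ Lg * ‖θ₁ - θ₂‖ * ‖h‖ / (1 - γ) := by
      rw [happF θ₁ h, happF θ₂ h, ← ds_sub hγ hP hpiE hη]
      exact ds_abs_le hγ hP hpiE hη (C := Lg * ‖θ₁ - θ₂‖ * ‖h‖)
        fun s a => hcs2 s a θ₁ θ₂ h
    have htGa : |discSum γ Phat (softmax (Q θ₁)) η
          (fun s a => ⟪gradient (r s a) θ₁, h⟫_ℝ)
        - discSum γ Phat (softmax (Q θ₁)) η (fun s a => ⟪gradient (r s a) θ₂, h⟫_ℝ)|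
        ≤ Lg * ‖θ₁ - θ₂‖ * ‖h‖ / (1 - γ) := by
      rw [← ds_sub hγ hPhat (softmax_policy _) hη]
      exact ds_abs_le hγ hPhat (softmax_policy _) hη (C := Lg * ‖θ₁ - θ₂‖ * ‖h‖)
        fun s a => hcs2 s a θ₁ θ₂ h
    have htGb := hdd θ₁ θ₂ (fun s a => ⟪gradient (r s a) θ₂, h⟫_ℝ) (Lr * ‖h‖)
      (mul_nonneg hLr0 (norm_nonneg h)) (fun s a => hcs s a θ₂ h)
    have htG : |ℓG θ₁ h - ℓG θ₂ h|
        ≤ Lg * ‖θ₁ - θ₂‖ * ‖h‖ / (1 - γ)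
          + (1 - γ)⁻¹ * (2 * Cd * (Real.sqrt ((Fintype.card S : ℝ)
              * (Fintype.card A : ℝ)) * (Lr / (1 - γ) * ‖θ₁ - θ₂‖))) * (Lr * ‖h‖) := by
      rw [happG θ₁ h, happG θ₂ h]
      refine (abs_sub_le _ (discSum γ Phat (softmax (Q θ₁)) η
        (fun s a => ⟪gradient (r s a) θ₂, h⟫_ℝ)) _).trans ?_
      exact add_le_add htGa htGb
    have hfin : Lg * ‖θ₁ - θ₂‖ * ‖h‖ / (1 - γ)
        + (Lg * ‖θ₁ - θ₂‖ * ‖h‖ / (1 - γ)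
          + (1 - γ)⁻¹ * (2 * Cd * (Real.sqrt ((Fintype.card S : ℝ)
              * (Fintype.card A : ℝ)) * (Lr / (1 - γ) * ‖θ₁ - θ₂‖))) * (Lr * ‖h‖))
        = (2 * (Lr / (1 - γ)) * Lr * Cd *
            Real.sqrt ((Fintype.card S : ℝ) * (Fintype.card A : ℝ)) + 2 * Lg) / (1 - γ)
          * ‖θ₁ - θ₂‖ * ‖h‖ := by
      ring
    obtain ⟨ha1, ha2⟩ := abs_le.1 htF
    obtain ⟨hb1, hb2⟩ := abs_le.1 htG
    rw [abs_le]
    constructor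
    · linarith
    · linarith
  have hgg := key (gradient (fun θ' : EuclideanSpace ℝ (Fin d) =>
      discSum γ P piE η (fun s a => r s a θ' + U s a) - ∑ s, η s * lse (Q θ') s) θ₁
    - gradient (fun θ' : EuclideanSpace ℝ (Fin d) =>
      discSum γ P piE η (fun s a => r s a θ' + U s a) - ∑ s, η s * lse (Q θ') s) θ₂)
  rw [real_inner_self_eq_norm_mul_norm, abs_of_nonneg (by positivity)] at hgg
  rcases eq_or_lt_of_le (norm_nonneg (gradient (fun θ' : EuclideanSpace ℝ (Fin d) =>
      discSum γ P piE η (fun s a => r s a θ' + U s a) - ∑ s, η s * lse (Q θ') s) θ₁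
    - gradient (fun θ' : EuclideanSpace ℝ (Fin d) =>
      discSum γ P piE η (fun s a => r s a θ' + U s a) - ∑ s, η s * lse (Q θ') s) θ₂))
    with h0 | h0
  · rw [← h0]
    have hcoeff : (0:ℝ) ≤ (2 * (Lr / (1 - γ)) * Lr * Cd *
        Real.sqrt ((Fintype.card S : ℝ) * (Fintype.card A : ℝ)) + 2 * Lg) / (1 - γ) := by
      apply div_nonneg _ h1γ.le
      have h1 : (0:ℝ) ≤ 2 * (Lr / (1 - γ)) * Lr * Cd *
          Real.sqrt ((Fintype.card S : ℝ) * (Fintype.card A : ℝ)) :=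
        mul_nonneg (mul_nonneg (mul_nonneg (by linarith : (0:ℝ) ≤ 2 * (Lr / (1 - γ))) hLr0)
          hCd0) hsq0
      linarith
    exact mul_nonneg hcoeff (norm_nonneg _)
  · exact le_of_mul_le_mul_right hgg h0
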